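/- Let p > 1 be real and let c, β be real numbers with c² ≥ 1 and β ≥ 0. If φ : ℝ → ℝ is a Schwartz function satisfying the solitary-wave equation φ''''(x) + βφ''(x) + (1−c²)φ(x) = |φ(x)|^{p−1}φ(x) for all x ∈ ℝ, then φ is identically zero. -/

import Mathlib

open MeasureTheory Filter SchwartzMap

lemma sch_tendsto_top (f : SchwartzMap ℝ ℝ) : Tendsto f atTop (nhds 0) :=
  (zero_at_infty f).mono_left (by rw [cocompact_eq_atBot_atTop]; exact le_sup_right)

lemma sch_tendsto_bot (f : SchwartzMap ℝ ℝ) : Tendsto f atBot (nhds 0) :=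
  (zero_at_infty f).mono_left (by rw [cocompact_eq_atBot_atTop]; exact le_sup_left)

lemma sch_int_mul (f g : SchwartzMap ℝ ℝ) : Integrable (fun x => f x * g x) :=
  (g.integrable).bdd_mul f.continuous.aestronglyMeasurable
    (Filter.Eventually.of_forall fun x => SchwartzMap.norm_le_seminorm ℝ f x)

lemma sch_hasDerivAt (f : SchwartzMap ℝ ℝ) (x : ℝ) :
    HasDerivAt f (SchwartzMap.derivCLM ℝ ℝ f x) x := by
  rw [SchwartzMap.derivCLM_apply]
  exact ((f.smooth 1).differentiable one_ne_zero x).hasDerivAt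

lemma sch_deriv_eq (f : SchwartzMap ℝ ℝ) : deriv f = SchwartzMap.derivCLM ℝ ℝ f :=
  funext fun x => (SchwartzMap.derivCLM_apply ℝ f x).symm

lemma sch_ibp (f g : SchwartzMap ℝ ℝ) :
    ∫ x, SchwartzMap.derivCLM ℝ ℝ f x * g x = - ∫ x, f x * SchwartzMap.derivCLM ℝ ℝ g x := by
  set D : SchwartzMap ℝ ℝ →L[ℝ] SchwartzMap ℝ ℝ := SchwartzMap.derivCLM ℝ ℝ
  have hderiv : ∀ x : ℝ, HasDerivAt (fun y => f y * g y) (D f x * g x + f x * D g x) x :=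
    fun x => (sch_hasDerivAt f x).mul (sch_hasDerivAt g x)
  have hint : Integrable (fun x => D f x * g x + f x * D g x) :=
    (sch_int_mul (D f) g).add (sch_int_mul f (D g))
  have htop : Tendsto (fun y => f y * g y) atTop (nhds 0) := by
    simpa using (sch_tendsto_top f).mul (sch_tendsto_top g)
  have hbot : Tendsto (fun y => f y * g y) atBot (nhds 0) := by
    simpa using (sch_tendsto_bot f).mul (sch_tendsto_bot g)
  have h1 : ∫ x in Set.Ioi (0:ℝ), (D f x * g x + f x * D g x) = 0 - f 0 * g 0 :=
    integral_Ioi_of_hasDerivAt_of_tendsto' (fun x _ => hderiv x) hint.integrableOn htop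
  have h2 : ∫ x in Set.Iic (0:ℝ), (D f x * g x + f x * D g x) = f 0 * g 0 - 0 :=
    integral_Iic_of_hasDerivAt_of_tendsto' (fun x _ => hderiv x) hint.integrableOn hbot
  have h3 : ∫ x, (D f x * g x + f x * D g x) = 0 := by
    rw [← intervalIntegral.integral_Iic_add_Ioi hint.integrableOn hint.integrableOn, h1, h2]; ring
  rw [integral_add (sch_int_mul (D f) g) (sch_int_mul f (D g))] at h3
  linarith

lemma absRpow_eq (q : ℝ) (t : ℝ) : (t ^ 2 : ℝ) ^ q = |t| ^ (2 * q) := by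
  rw [← sq_abs, ← Real.rpow_natCast |t| 2, ← Real.rpow_mul (abs_nonneg t)]
  norm_num

lemma hasDerivAt_absRpow {p : ℝ} (hp : 1 ≤ p) (t : ℝ) :
    HasDerivAt (fun s : ℝ => |s| ^ (p + 1)) ((p + 1) * (|t| ^ (p - 1) * t)) t := by
  have h2 : HasDerivAt (fun s : ℝ => s ^ 2) (2 * t) t := by
    simpa using hasDerivAt_pow 2 t
  have h3 := HasDerivAt.rpow_const (p := (p + 1) / 2) h2 (Or.inr (by linarith))
  have he : (fun s : ℝ => |s| ^ (p + 1)) = (fun s : ℝ => (s ^ 2) ^ ((p + 1) / 2)) := by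
    funext s
    rw [absRpow_eq]
    congr 1
    ring
  rw [he]
  convert h3 using 1
  rw [absRpow_eq, show 2 * ((p + 1) / 2 - 1) = p - 1 by ring]
  ring

lemma rpow_two_eq (t : ℝ) : |t| ^ (2:ℝ) = t * t := by
  rw [show (2:ℝ) = ((2:ℕ):ℝ) by norm_num, Real.rpow_natCast, sq_abs]
  ring

lemma pointRHS {p : ℝ} (hp : 1 ≤ p) (t : ℝ) : |t| ^ (p - 1) * t * t = |t| ^ (p + 1) := by
  rw [mul_assoc, ← rpow_two_eq, ← Real.rpow_add' (abs_nonneg t) (by intro h; linarith : p - 1 + 2 ≠ 0)]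
  congr 1
  ring

lemma cont_absRpow {q : ℝ} (hq : 0 < q) : Continuous (fun t : ℝ => |t| ^ q) := by
  rw [continuous_iff_continuousAt]
  intro t
  exact (Real.continuousAt_rpow_const _ q (Or.inr hq.le)).comp continuous_abs.continuousAt

lemma int_nonlin {p : ℝ} (hp : 1 ≤ p) (φ : SchwartzMap ℝ ℝ) :
    Integrable (fun x => |φ x| ^ (p + 1)) := by
  set M := SchwartzMap.seminorm ℝ 0 0 φ with hM
  have hMb : ∀ x, |φ x| ≤ M := fun x => by
    simpa [Real.norm_eq_abs] using SchwartzMap.norm_le_seminorm ℝ φ x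
  have hM0 : 0 ≤ M := le_trans (abs_nonneg _) (hMb 0)
  refine ((sch_int_mul φ φ).const_mul (M ^ (p - 1))).mono ?_ ?_
  · exact ((cont_absRpow (by linarith)).comp φ.continuous).aestronglyMeasurable
  · refine Filter.Eventually.of_forall fun x => ?_
    have h1 : |φ x| ^ (p + 1) = |φ x| ^ (p - 1) * (φ x * φ x) := by
      rw [← mul_assoc, pointRHS hp]
    have h2 : |φ x| ^ (p - 1) ≤ M ^ (p - 1) :=
      Real.rpow_le_rpow (abs_nonneg _) (hMb x) (by linarith)
    rw [Real.norm_eq_abs, abs_of_nonneg (Real.rpow_nonneg (abs_nonneg _) _), h1]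
    refine le_trans (mul_le_mul_of_nonneg_right h2 (mul_self_nonneg _)) (le_abs_self _)

noncomputable def sD : SchwartzMap ℝ ℝ → SchwartzMap ℝ ℝ := fun f => SchwartzMap.derivCLM ℝ ℝ f

lemma sch_hasDerivAt' (f : SchwartzMap ℝ ℝ) (x : ℝ) : HasDerivAt f (sD f x) x :=
  sch_hasDerivAt f x

lemma sch_deriv_eq' (f : SchwartzMap ℝ ℝ) : deriv f = sD f :=
  sch_deriv_eq f

lemma sch_ibp' (f g : SchwartzMap ℝ ℝ) :
    ∫ x, sD f x * g x = - ∫ x, f x * sD g x :=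
  sch_ibp f g

/-- Nonexistence of nontrivial Schwartz solitary waves when `c² ≥ 1` and `β ≥ 0`. -/
theorem nonexistence_supersonic_nonneg_beta (p c β : ℝ) (hp : 1 < p) (hc : 1 ≤ c ^ 2)
    (hβ : 0 ≤ β) (φ : SchwartzMap ℝ ℝ)
    (hφ : ∀ x : ℝ, iteratedDeriv 4 (⇑φ) x + β * iteratedDeriv 2 (⇑φ) x
      + (1 - c ^ 2) * φ x = |φ x| ^ (p - 1) * φ x) :
    ∀ x : ℝ, φ x = 0 := by
  have hp1 : (1:ℝ) ≤ p := hp.le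
  have hp1' : p + 1 ≠ 0 := by linarith
  set u1 := sD φ with hu1
  set u2 := sD u1 with hu2
  set u3 := sD u2 with hu3
  set u4 := sD u3 with hu4
  have hid2 : iteratedDeriv 2 ⇑φ = ⇑u2 := by
    rw [iteratedDeriv_succ, iteratedDeriv_one, sch_deriv_eq' φ, sch_deriv_eq' u1]
  have hid4 : iteratedDeriv 4 ⇑φ = ⇑u4 := by
    rw [iteratedDeriv_succ, iteratedDeriv_succ, iteratedDeriv_succ, iteratedDeriv_one,
      sch_deriv_eq' φ, sch_deriv_eq' u1, sch_deriv_eq' u2, sch_deriv_eq' u3]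
  set s : ℝ := 1 - c ^ 2 with hs
  have hsle : s ≤ 0 := by rw [hs]; linarith
  have heq : ∀ x, u4 x + β * u2 x + s * φ x = |φ x| ^ (p - 1) * φ x := by
    intro x
    have h := hφ x
    rwa [hid4, hid2] at h
  set A := ∫ x, u2 x * u2 x with hA
  set B := ∫ x, u1 x * u1 x with hB
  set C := ∫ x, φ x * φ x with hC
  set P := ∫ x, |φ x| ^ (p + 1) with hP
  have hB0 : 0 ≤ B := integral_nonneg fun x => mul_self_nonneg _
  have hC0 : 0 ≤ C := integral_nonneg fun x => mul_self_nonneg _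
  have hP0 : 0 ≤ P := integral_nonneg fun x => Real.rpow_nonneg (abs_nonneg _) _
  -- integration by parts chains
  have e4 : ∫ x, u4 x * φ x = A := by
    rw [hu4, sch_ibp' u3 φ, ← hu1, hu3, sch_ibp' u2 u1, ← hu2, neg_neg, ← hA]
  have e2 : ∫ x, u2 x * φ x = -B := by
    rw [hu2, sch_ibp' u1 φ, ← hu1, ← hB]
  have e31 : ∫ x, u3 x * u1 x = -A := by
    rw [hu3, sch_ibp' u2 u1, ← hu2, ← hA]
  -- identity (i)
  have key1 : P = A - β * B + s * C := by
    have hpt : ∀ x, u4 x * φ x + β * (u2 x * φ x) + s * (φ x * φ x) = |φ x| ^ (p + 1) := by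
      intro x
      rw [← pointRHS hp1 (φ x), ← heq x]
      ring
    have hP' : P = ∫ x, (u4 x * φ x + β * (u2 x * φ x) + s * (φ x * φ x)) := by
      rw [hP]
      congr 1
      funext x
      exact (hpt x).symm
    have hI1 : Integrable (fun x => u4 x * φ x) := sch_int_mul u4 φ
    have hI2 : Integrable (fun x => β * (u2 x * φ x)) := (sch_int_mul u2 φ).const_mul β
    have hI3 : Integrable (fun x => s * (φ x * φ x)) := (sch_int_mul φ φ).const_mul s
    have hI12 : Integrable (fun x => u4 x * φ x + β * (u2 x * φ x)) := hI1.add hI2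
    rw [integral_add hI12 hI3, integral_add hI1 hI2,
      integral_const_mul, integral_const_mul, e4, e2, ← hC] at hP'
    rw [hP']
    ring
  -- the conserved first integral E
  set N : ℝ → ℝ := fun x => |φ x| ^ (p + 1) with hN
  set E : ℝ → ℝ := fun x =>
    u3 x * u1 x - u2 x * u2 x / 2 + β / 2 * (u1 x * u1 x) + s / 2 * (φ x * φ x)
      - N x / (p + 1) with hE
  have hEderiv : ∀ x, HasDerivAt E 0 x := by
    intro x
    have h0 := sch_hasDerivAt' φ x
    have h1 := sch_hasDerivAt' u1 x
    have h2 := sch_hasDerivAt' u2 x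
    have h3 := sch_hasDerivAt' u3 x
    rw [← hu1] at h0; rw [← hu2] at h1; rw [← hu3] at h2; rw [← hu4] at h3
    have hNd : HasDerivAt N ((p + 1) * (|φ x| ^ (p - 1) * φ x) * u1 x) x :=
      (hasDerivAt_absRpow hp1 (φ x)).comp x h0
    have hEt : HasDerivAt E
        ((u4 x * u1 x + u3 x * u2 x) - (u3 x * u2 x + u2 x * u3 x) / 2
          + β / 2 * (u2 x * u1 x + u1 x * u2 x) + s / 2 * (u1 x * φ x + φ x * u1 x)
          - ((p + 1) * (|φ x| ^ (p - 1) * φ x) * u1 x) / (p + 1)) x :=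
      ((((h3.mul h1).sub ((h2.mul h2).div_const 2)).add
        ((h1.mul h1).const_mul (β / 2))).add
        ((h0.mul h0).const_mul (s / 2))).sub (hNd.div_const (p + 1))
    have hval : (u4 x * u1 x + u3 x * u2 x) - (u3 x * u2 x + u2 x * u3 x) / 2
          + β / 2 * (u2 x * u1 x + u1 x * u2 x) + s / 2 * (u1 x * φ x + φ x * u1 x)
          - ((p + 1) * (|φ x| ^ (p - 1) * φ x) * u1 x) / (p + 1) = 0 := by
      rw [mul_assoc, mul_div_cancel_left₀ _ hp1']
      linear_combination (u1 x) * heq x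
    rw [hval] at hEt
    exact hEt
  -- E is constant, with limit 0 at infinity, hence identically 0
  have hEc : ∀ x, E x = E 0 := fun x =>
    is_const_of_deriv_eq_zero (fun y => (hEderiv y).differentiableAt)
      (fun y => (hEderiv y).deriv) x 0
  have hNt : Tendsto N atTop (nhds 0) := by
    have h := ((cont_absRpow (show (0:ℝ) < p + 1 by linarith)).continuousAt
      (x := (0:ℝ))).tendsto.comp (sch_tendsto_top φ)
    show Tendsto (fun x => |φ x| ^ (p + 1)) atTop (nhds 0)
    simpa [Real.zero_rpow hp1', Function.comp_def] using h
  have hEtop : Tendsto E atTop (nhds 0) := by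
    have h := (((((sch_tendsto_top u3).mul (sch_tendsto_top u1)).sub
      (((sch_tendsto_top u2).mul (sch_tendsto_top u2)).div_const 2)).add
      (((sch_tendsto_top u1).mul (sch_tendsto_top u1)).const_mul (β / 2))).add
      (((sch_tendsto_top φ).mul (sch_tendsto_top φ)).const_mul (s / 2))).sub
      (hNt.div_const (p + 1))
    simpa using h
  have hE0 : ∀ x, E x = 0 := by
    have hconst : Tendsto E atTop (nhds (E 0)) :=
      tendsto_const_nhds.congr fun x => (hEc x).symm
    have h00 : E 0 = 0 := tendsto_nhds_unique hconst hEtop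
    intro x; rw [hEc x, h00]
  -- identity (ii): integrate E ≡ 0
  have hJ1 : Integrable (fun x => u3 x * u1 x) := sch_int_mul u3 u1
  have hJ2 : Integrable (fun x => u2 x * u2 x / 2) := (sch_int_mul u2 u2).div_const 2
  have hJ3 : Integrable (fun x => β / 2 * (u1 x * u1 x)) := (sch_int_mul u1 u1).const_mul _
  have hJ4 : Integrable (fun x => s / 2 * (φ x * φ x)) := (sch_int_mul φ φ).const_mul _
  have hJ5 : Integrable (fun x => N x / (p + 1)) := (int_nonlin hp1 φ).div_const _
  have hsplit : ∫ x, E x = (∫ x, u3 x * u1 x) - (∫ x, u2 x * u2 x) / 2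
      + β / 2 * B + s / 2 * C - P / (p + 1) := by
    rw [hE]
    have hK1 : Integrable (fun x => u3 x * u1 x - u2 x * u2 x / 2) := hJ1.sub hJ2
    have hK2 : Integrable (fun x => u3 x * u1 x - u2 x * u2 x / 2
        + β / 2 * (u1 x * u1 x)) := hK1.add hJ3
    have hK3 : Integrable (fun x => u3 x * u1 x - u2 x * u2 x / 2
        + β / 2 * (u1 x * u1 x) + s / 2 * (φ x * φ x)) := hK2.add hJ4
    rw [integral_sub hK3 hJ5, integral_add hK2 hJ4, integral_add hK1 hJ3,
      integral_sub hJ1 hJ2, integral_div, integral_const_mul, integral_const_mul, integral_div]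
  have hEint0 : ∫ x, E x = 0 := by
    have : E = fun _ => (0:ℝ) := funext hE0
    rw [this, integral_zero]
  have key2 : -(3 * A) + β * B + s * C = 2 * (P / (p + 1)) := by
    have h := hsplit
    rw [hEint0, e31, ← hA] at h
    linear_combination -2 * h
  -- final algebra: P = 0
  have hβB : 0 ≤ β * B := mul_nonneg hβ hB0
  have hsC : s * C ≤ 0 := mul_nonpos_of_nonpos_of_nonneg hsle hC0
  have hPd : 0 ≤ P / (p + 1) := div_nonneg hP0 (by linarith)
  have hPzero : P = 0 := by
    clear_value A B C P s
    linarith [key1, key2, hβB, hsC, hPd, hP0]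
  -- conclude φ = 0
  have hNae : (fun x => |φ x| ^ (p + 1)) =ᵐ[volume] (0 : ℝ → ℝ) :=
    (integral_eq_zero_iff_of_nonneg (fun x => Real.rpow_nonneg (abs_nonneg _) _)
      (int_nonlin hp1 φ)).mp (by rw [← hP]; exact hPzero)
  have hφae : ⇑φ =ᵐ[volume] (0 : ℝ → ℝ) := by
    refine hNae.mono fun x hx => ?_
    simp only [Pi.zero_apply] at hx ⊢
    have := (Real.rpow_eq_zero_iff_of_nonneg (abs_nonneg (φ x))).mp hx
    exact abs_eq_zero.mp this.1
  have hfin : ⇑φ = (0 : ℝ → ℝ) :=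
    (Continuous.ae_eq_iff_eq volume φ.continuous continuous_const).mp hφae
  intro x
  exact congrFun hfin x
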